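/- arXiv:2310.06669 — 3 statements merged into one kernel-verified Lean document; each statement's English description precedes it below -/
import Mathlib

section
/- Let e = E_{12} + E_{23} + ⋯ + E_{N−1,N} (the case ū = 0). Then for all 1 ≤ j < i ≤ N and all y ∈ 𝔪_N one has Tr(e·[∑_{m=1}^{j} E_{m,m+i−1−j}, y]) = −y_{ij}, where y_{ij} denotes the (i,j) matrix entry of y. Equivalently, the inverse of the isomorphism ω̃ : 𝔪_N → 𝔪_N^* induced by ω(0) sends the dual basis vector E^*_{ij} (for i > j) to −∑_{m=1}^{j} E_{m,m+i−1−j}. -/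
noncomputable section

/-- The mirabolic subalgebra `𝔪_N ⊆ 𝔤𝔩_N`: matrices whose last column vanishes. -/
def mirMat (N : ℕ) (hN : 1 ≤ N) : Submodule ℂ (Matrix (Fin N) (Fin N) ℂ) where
  carrier := {x | ∀ i : Fin N, x i ⟨N - 1, by omega⟩ = 0}
  add_mem' := by intro a b ha hb i; simp [Matrix.add_apply, ha i, hb i]
  zero_mem' := by intro i; simp
  smul_mem' := by intro c a ha i; simp [Matrix.smul_apply, ha i]

/-- `e_ū = E_{12} + ⋯ + E_{N-1,N} − ∑ u_i E_{ii}`. -/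
def eMat (N : ℕ) (hN : 1 ≤ N) (u : Fin (N - 1) → ℂ) : Matrix (Fin N) (Fin N) ℂ :=
  (∑ j : Fin (N - 1), Matrix.single
      ⟨j, by have := j.isLt; omega⟩ ⟨(j : ℕ) + 1, by have := j.isLt; omega⟩ (1 : ℂ)) -
  ∑ j : Fin (N - 1), u j • Matrix.single
      ⟨j, by have := j.isLt; omega⟩ ⟨j, by have := j.isLt; omega⟩ (1 : ℂ)

/-- The bilinear form `(x,y) ↦ Tr(e_ū·[x,y])` on all of `𝔤𝔩_N`. -/
def omFull (N : ℕ) (hN : 1 ≤ N) (u : Fin (N - 1) → ℂ) :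
    Matrix (Fin N) (Fin N) ℂ →ₗ[ℂ] Matrix (Fin N) (Fin N) ℂ →ₗ[ℂ] ℂ :=
  (LinearMap.mul ℂ (Matrix (Fin N) (Fin N) ℂ) -
      (LinearMap.mul ℂ (Matrix (Fin N) (Fin N) ℂ)).flip).compr₂
    ((Matrix.traceLinearMap (Fin N) ℂ ℂ).comp (LinearMap.mulLeft ℂ (eMat N hN u)))

/-- `ω(ū)`: the restriction of the above form to `𝔪_N`. -/
def omL (N : ℕ) (hN : 1 ≤ N) (u : Fin (N - 1) → ℂ) :
    mirMat N hN →ₗ[ℂ] mirMat N hN →ₗ[ℂ] ℂ :=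
  (omFull N hN u).compl₁₂ (mirMat N hN).subtype (mirMat N hN).subtype

/-- The dual basis functional `E*_{ab}` on `𝔪_N` (the `(a,b)` matrix entry). -/
def entryFun (N : ℕ) (hN : 1 ≤ N) (a b : Fin N) : mirMat N hN →ₗ[ℂ] ℂ where
  toFun x := x.1 a b
  map_add' x y := by simp [Matrix.add_apply]
  map_smul' c x := by simp [Matrix.smul_apply]

/-- The matrix unit `E_{ab}` as an element of `𝔪_N` (for `b` not the last column). -/
def mirUnit (N : ℕ) (hN : 1 ≤ N) (a : Fin N) (b : ℕ) (hb : b + 1 < N) : mirMat N hN :=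
  ⟨Matrix.single a ⟨b, by omega⟩ 1, by
    intro i
    apply Matrix.single_apply_of_ne
    rintro ⟨rfl, h⟩
    have : b = N - 1 := congrArg Fin.val h
    omega⟩

/-- `∑_{m=1}^{j} E_{m, m+i−1−j}` (1-based indices). -/
def hookSum (N : ℕ) (i j : ℕ) (hji : j < i) (hiN : i ≤ N) : Matrix (Fin N) (Fin N) ℂ :=
  ∑ m : Fin j, Matrix.single
    ⟨m, by have := m.isLt; omega⟩ ⟨(m : ℕ) + i - j - 1, by have := m.isLt; omega⟩ (1 : ℂ)

lemma eMat_zero_apply (N : ℕ) (hN : 1 ≤ N) (a c : Fin N) :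
    eMat N hN (fun _ => 0) a c = if (a:ℕ)+1 = (c:ℕ) then 1 else 0 := by
  unfold eMat
  simp only [zero_smul, Finset.sum_const_zero, Matrix.sub_apply, Matrix.zero_apply, sub_zero,
    Matrix.sum_apply, Matrix.single, Matrix.of_apply, Fin.ext_iff]
  by_cases h : (a:ℕ)+1 = (c:ℕ)
  · have ha : (a:ℕ) < N - 1 := by have := c.isLt; omega
    rw [if_pos h, Finset.sum_eq_single (⟨(a:ℕ), ha⟩ : Fin (N-1))]
    · simp [h]
    · intro b _ hb
      rw [if_neg]
      rintro ⟨h1, h2⟩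
      exact hb (by simp [Fin.ext_iff, h1])
    · simp
  · rw [if_neg h, Finset.sum_eq_zero]
    intro b _
    rw [if_neg]
    rintro ⟨h1, h2⟩
    omega

lemma hookSum_apply (N i j : ℕ) (hji : j < i) (hiN : i ≤ N) (a c : Fin N) :
    hookSum N i j hji hiN a c =
      if (a:ℕ) < j ∧ (c:ℕ) = (a:ℕ) + i - j - 1 then 1 else 0 := by
  unfold hookSum
  simp only [Matrix.sum_apply, Matrix.single, Matrix.of_apply, Fin.ext_iff]
  by_cases h : (a:ℕ) < j ∧ (c:ℕ) = (a:ℕ) + i - j - 1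
  · rw [if_pos h, Finset.sum_eq_single (⟨(a:ℕ), h.1⟩ : Fin j)]
    · simp [h.2]
    · intro b _ hb
      rw [if_neg]
      rintro ⟨h1, h2⟩
      exact hb (by simp [Fin.ext_iff, h1])
    · simp
  · rw [if_neg h, Finset.sum_eq_zero]
    intro b _
    rw [if_neg]
    rintro ⟨h1, h2⟩
    exact h ⟨by omega, by omega⟩

lemma key_comm (N : ℕ) (hN : 2 ≤ N) (i j : ℕ) (hj : 1 ≤ j) (hji : j < i) (hiN : i ≤ N) :
    eMat N (le_trans one_le_two hN) (fun _ => 0) * hookSum N i j hji hiN -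
      hookSum N i j hji hiN * eMat N (le_trans one_le_two hN) (fun _ => 0) =
    - Matrix.single (⟨j - 1, lt_of_le_of_lt (Nat.sub_le j 1) (lt_of_lt_of_le hji hiN)⟩ : Fin N)
      (⟨i - 1, lt_of_lt_of_le (Nat.sub_lt (lt_of_le_of_lt (Nat.zero_le j) hji) Nat.one_pos) hiN⟩ : Fin N) (1 : ℂ) := by
  ext a b
  simp only [Matrix.sub_apply, Matrix.neg_apply, Matrix.mul_apply, eMat_zero_apply,
    hookSum_apply, Matrix.single, Matrix.of_apply, Fin.ext_iff]
  have hEH : (∑ c : Fin N, (if (a:ℕ)+1 = (c:ℕ) then (1:ℂ) else 0) *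
      (if (c:ℕ) < j ∧ (b:ℕ) = (c:ℕ) + i - j - 1 then 1 else 0)) =
      if (a:ℕ)+1 < j ∧ (b:ℕ) = (a:ℕ) + i - j then 1 else 0 := by
    by_cases ha : (a:ℕ)+1 < N
    · rw [Finset.sum_eq_single (⟨(a:ℕ)+1, ha⟩ : Fin N)]
      · have hiff : ((a:ℕ)+1 < j ∧ (b:ℕ) = (a:ℕ)+1+i-j-1 ↔ (a:ℕ)+1 < j ∧ (b:ℕ) = (a:ℕ)+i-j) := by
          omega
        simp [hiff]
      · intro c _ hc
        rw [if_neg, zero_mul]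
        intro h1
        exact hc (Fin.val_injective h1.symm)
      · simp
    · rw [Finset.sum_eq_zero, eq_comm, if_neg]
      · rintro ⟨h1, h2⟩; omega
      · intro c _
        rw [if_neg, zero_mul]
        intro h1
        have := c.isLt; omega
  have hHE : (∑ c : Fin N, (if (a:ℕ) < j ∧ (c:ℕ) = (a:ℕ) + i - j - 1 then (1:ℂ) else 0) *
      (if (c:ℕ)+1 = (b:ℕ) then 1 else 0)) =
      if (a:ℕ) < j ∧ (b:ℕ) = (a:ℕ) + i - j then 1 else 0 := by
    by_cases h1 : (a:ℕ) < j
    · have hc' : (a:ℕ) + i - j - 1 < N := by omega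
      rw [Finset.sum_eq_single (⟨(a:ℕ) + i - j - 1, hc'⟩ : Fin N)]
      · have hiff : ((a:ℕ)+i-j-1+1 = (b:ℕ) ↔ (b:ℕ) = (a:ℕ)+i-j) := by omega
        simp [h1, hiff]
      · intro c _ hc
        rw [if_neg, zero_mul]
        rintro ⟨_, h2⟩
        exact hc (Fin.val_injective h2)
      · simp
    · rw [if_neg (by rintro ⟨h, _⟩; exact h1 h), Finset.sum_eq_zero]
      intro c _
      rw [if_neg (by rintro ⟨h, _⟩; exact h1 h), zero_mul]
  rw [hEH, hHE]
  have haN := a.isLt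
  have hbN := b.isLt
  split_ifs with h1 h2 h3 h2 h3 h3
  all_goals try ring1
  all_goals exfalso
  all_goals omega

theorem statement4 (N : ℕ) (hN : 2 ≤ N) (i j : ℕ) (hj : 1 ≤ j) (hji : j < i) (hiN : i ≤ N) :
    ∀ y : mirMat N (le_trans one_le_two hN),
      Matrix.trace (eMat N (le_trans one_le_two hN) (fun _ => 0) *
          (hookSum N i j hji hiN * (y : Matrix (Fin N) (Fin N) ℂ) -
            (y : Matrix (Fin N) (Fin N) ℂ) * hookSum N i j hji hiN)) =
        - (y : Matrix (Fin N) (Fin N) ℂ) ⟨i - 1, by omega⟩ ⟨j - 1, by omega⟩ := by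
  intro y
  set e := eMat N (le_trans one_le_two hN) (fun _ => 0)
  set H := hookSum N i j hji hiN
  set Y := (y : Matrix (Fin N) (Fin N) ℂ)
  have step1 : Matrix.trace (e * (H * Y - Y * H)) = Matrix.trace ((e * H - H * e) * Y) := by
    rw [mul_sub, sub_mul, Matrix.trace_sub, Matrix.trace_sub, ← mul_assoc e H Y]
    congr 1
    rw [← mul_assoc, Matrix.trace_mul_comm, ← mul_assoc]
  rw [step1, key_comm N hN i j hj hji hiN, Matrix.neg_mul, Matrix.trace_neg, neg_inj]
  rw [Matrix.trace]
  rw [Finset.sum_eq_single (⟨j - 1, by omega⟩ : Fin N)]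
  · simp [Matrix.diag_apply]
  · intro c _ hc
    simp only [Matrix.diag_apply]
    exact Matrix.single_mul_apply_of_ne _ _ _ _ _ hc _
  · simp
end
end

section
/- Let ℏ ∈ ℂ be nonzero, u ∈ ℂ, and let W be a right U_ℏ(𝔪_2)-module on which E_{21} − 1 acts locally nilpotently (for every w ∈ W there is n with w·(E_{21}−1)^n = 0). Define P(u) : W → W by P(u)(w) = ∑_{k ≥ 0} ℏ^{−k}·(1/k!)·w·(E_{21}−1)^k·(E_{11}+u)(E_{11}+u−ℏ)⋯(E_{11}+u−(k−1)ℏ) (a locally finite sum). Then P(u)(w)·(E_{21} − 1) = 0 for every w ∈ W. -/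
noncomputable section
open MulOpposite

/-- Defining relation of `U_ℏ(𝔪_2)`: generators `E_{11}` (= `true`) and `E_{21}` (= `false`)
with `E_{11}E_{21} − E_{21}E_{11} = −ℏE_{21}`. -/
inductive m2Rel (ℏ : ℂ) : FreeAlgebra ℂ Bool → FreeAlgebra ℂ Bool → Prop
  | comm : m2Rel ℏ (FreeAlgebra.ι ℂ true * FreeAlgebra.ι ℂ false)
      (FreeAlgebra.ι ℂ false * FreeAlgebra.ι ℂ true - ℏ • FreeAlgebra.ι ℂ false)

/-- `U_ℏ(𝔪_2)`. -/
abbrev Um2 (ℏ : ℂ) : Type := RingQuot (m2Rel ℏ)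

/-- The generator `E_{11}`. -/
def E11 (ℏ : ℂ) : Um2 ℏ := RingQuot.mkAlgHom ℂ (m2Rel ℏ) (FreeAlgebra.ι ℂ true)

/-- The generator `E_{21}`. -/
def E21 (ℏ : ℂ) : Um2 ℏ := RingQuot.mkAlgHom ℂ (m2Rel ℏ) (FreeAlgebra.ι ℂ false)

/-- The truncated sum
`∑_{k<n} ℏ^{−k}(1/k!) w·(E_{21}−1)^k·(E_{11}+u)(E_{11}+u−ℏ)⋯(E_{11}+u−(k−1)ℏ)`;
when `w·(E_{21}−1)^n = 0` this is the (locally finite) value `P(u)(w)` of the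
Kirillov projector for `𝔪_2`. -/
def kirP2 (ℏ u : ℂ) {W : Type*} [AddCommGroup W] [Module ℂ W] [Module (Um2 ℏ)ᵐᵒᵖ W]
    (n : ℕ) (w : W) : W :=
  ∑ k ∈ Finset.range n, (ℏ⁻¹ ^ k * ((Nat.factorial k : ℂ))⁻¹) •
    (op ((E21 ℏ - 1) ^ k *
      (List.ofFn fun i : Fin k => E11 ℏ + algebraMap ℂ (Um2 ℏ) (u - (i : ℕ) * ℏ)).prod) • w)


lemma E_comm (ℏ : ℂ) : E11 ℏ * E21 ℏ = E21 ℏ * E11 ℏ - ℏ • E21 ℏ := by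
  have h := RingQuot.mkAlgHom_rel ℂ (m2Rel.comm (ℏ := ℏ))
  simpa [E11, E21, map_mul, map_sub, map_smul] using h

def fgen (ℏ u : ℂ) (i : ℕ) : Um2 ℏ := E11 ℏ + algebraMap ℂ (Um2 ℏ) (u - i * ℏ)
def Pr (ℏ u : ℂ) (a k : ℕ) : Um2 ℏ := (List.ofFn fun i : Fin k => fgen ℏ u (a + i)).prod

lemma Pr_zero (ℏ u : ℂ) (a : ℕ) : Pr ℏ u a 0 = 1 := by simp [Pr]

lemma Pr_succ (ℏ u : ℂ) (a k : ℕ) : Pr ℏ u a (k+1) = Pr ℏ u a k * fgen ℏ u (a+k) := by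
  unfold Pr
  rw [List.ofFn_succ', List.concat_eq_append, List.prod_append]
  simp [Fin.castSucc]

lemma Pr_succ' (ℏ u : ℂ) (a k : ℕ) : Pr ℏ u a (k+1) = fgen ℏ u a * Pr ℏ u (a+1) k := by
  unfold Pr
  rw [List.ofFn_succ, List.prod_cons]
  congr 2
  apply congrArg List.ofFn
  funext i
  congr 1
  simp only [Fin.val_succ]
  omega

lemma fgen_smul_one (ℏ u : ℂ) (i : ℕ) : fgen ℏ u i = E11 ℏ + (u - i * ℏ) • 1 := by
  rw [fgen, Algebra.algebraMap_eq_smul_one]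

lemma fgen_comm (ℏ u : ℂ) (i j : ℕ) : fgen ℏ u i * fgen ℏ u j = fgen ℏ u j * fgen ℏ u i := by
  simp only [fgen_smul_one]
  simp only [mul_add, add_mul, mul_smul_comm, smul_mul_assoc, mul_one, one_mul, smul_smul]
  module

lemma fgen_Pr_comm (ℏ u : ℂ) (j a k : ℕ) :
    fgen ℏ u j * Pr ℏ u a k = Pr ℏ u a k * fgen ℏ u j := by
  induction k with
  | zero => simp [Pr_zero]
  | succ k ih => rw [Pr_succ, ← mul_assoc, ih, mul_assoc, fgen_comm ℏ u j (a+k), ← mul_assoc]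

lemma fgen_T (ℏ u : ℂ) (i : ℕ) :
    fgen ℏ u i * (E21 ℏ - 1) = (E21 ℏ - 1) * fgen ℏ u (i+1) - ℏ • 1 := by
  simp only [fgen_smul_one]
  push_cast
  simp only [mul_sub, sub_mul, add_mul, mul_add, mul_one, one_mul, mul_smul_comm,
    smul_mul_assoc]
  rw [E_comm]
  module

lemma fgen_lin (ℏ u : ℂ) (k : ℕ) :
    (((k:ℂ)+1) * ℏ) • fgen ℏ u (k+2) + ℏ • fgen ℏ u 0 = (((k:ℂ)+2) * ℏ) • fgen ℏ u (k+1) := by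
  simp only [fgen_smul_one]
  push_cast
  module

lemma key (ℏ u : ℂ) (k : ℕ) : Pr ℏ u 0 (k+1) * (E21 ℏ - 1)
    = (E21 ℏ - 1) * Pr ℏ u 1 (k+1) - (((k:ℂ)+1) * ℏ) • Pr ℏ u 1 k := by
  induction k with
  | zero =>
    rw [Pr_succ, Pr_succ, Pr_zero, Pr_zero, one_mul, one_mul]
    have := fgen_T ℏ u 0
    simpa using this
  | succ k ih =>
    rw [Pr_succ ℏ u 0 (k+1), mul_assoc]
    have h0 : (0:ℕ) + (k+1) = (k+1) := by omega
    rw [h0, fgen_T, mul_sub, ← mul_assoc, ih, mul_smul_comm, sub_mul, smul_mul_assoc,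
      mul_assoc]
    have h1 : (1:ℕ) + (k+1) = k + 2 := by omega
    rw [← h1, ← Pr_succ ℏ u 1 (k+1)]
    have h2 : Pr ℏ u 0 (k+1) = Pr ℏ u 1 k * fgen ℏ u 0 := by
      rw [Pr_succ' ℏ u 0 k, fgen_Pr_comm]
    rw [h2]
    have h3 : Pr ℏ u 1 k * fgen ℏ u (1+(k+1)) = Pr ℏ u 1 k * fgen ℏ u (k+2) := by
      congr 2
    rw [h3]
    have expand : (((k:ℂ)+1) * ℏ) • (Pr ℏ u 1 k * fgen ℏ u (k+2)) + ℏ • (Pr ℏ u 1 k * fgen ℏ u 0)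
        = (((k:ℂ)+1+1) * ℏ) • Pr ℏ u 1 (k+1) := by
      rw [← mul_smul_comm, ← mul_smul_comm, ← mul_add, fgen_lin,
        Pr_succ ℏ u 1 k, show (1:ℕ) + k = k + 1 from by omega]
      ring_nf
      exact mul_smul_comm _ _ _
    push_cast
    rw [mul_one, sub_sub, expand, show (1:ℕ)+(k+1) = (k+1+1) from by omega]


section ModulePart
variable {ℏ u : ℂ} {W : Type*} [AddCommGroup W] [Module ℂ W] [Module (Um2 ℏ)ᵐᵒᵖ W]
  [IsScalarTower ℂ (Um2 ℏ)ᵐᵒᵖ W]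

lemma op_op_smul (a b : Um2 ℏ) (v : W) : op b • (op a • v) = op (a * b) • v := by
  rw [← mul_smul, ← op_mul]

lemma mop_smul_comm (m : (Um2 ℏ)ᵐᵒᵖ) (c0 : ℂ) (v : W) : m • (c0 • v) = c0 • (m • v) := by
  have h1 : c0 • v = (c0 • (1 : (Um2 ℏ)ᵐᵒᵖ)) • v := by rw [smul_assoc, one_smul]
  rw [h1, ← mul_smul, mul_smul_comm, mul_one, smul_assoc]

end ModulePart

lemma cfac_step (ℏ : ℂ) (hℏ : ℏ ≠ 0) (j : ℕ) :
    (ℏ⁻¹ ^ (j+1) * ((Nat.factorial (j+1) : ℂ))⁻¹) * (((j:ℂ)+1)*ℏ)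
      = ℏ⁻¹ ^ j * ((Nat.factorial j : ℂ))⁻¹ := by
  have h1 : ((Nat.factorial j : ℂ)) ≠ 0 := Nat.cast_ne_zero.2 (Nat.factorial_ne_zero j)
  have h2 : ((j:ℂ)+1) ≠ 0 := by
    have : ((j:ℂ)+1) = ((j+1 : ℕ) : ℂ) := by push_cast; ring
    rw [this]; exact Nat.cast_ne_zero.2 (Nat.succ_ne_zero j)
  rw [Nat.factorial_succ]
  push_cast
  field_simp
  ring_nf
  simp [hℏ]


theorem statement13 (ℏ : ℂ) (hℏ : ℏ ≠ 0) (u : ℂ)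
    (W : Type*) [AddCommGroup W] [Module ℂ W] [Module (Um2 ℏ)ᵐᵒᵖ W]
    [IsScalarTower ℂ (Um2 ℏ)ᵐᵒᵖ W]
    (hW : ∀ w : W, ∃ n : ℕ, op ((E21 ℏ - 1) ^ n) • w = 0)
    (w : W) (n : ℕ) (hn : op ((E21 ℏ - 1) ^ n) • w = 0) :
    op (E21 ℏ - 1) • kirP2 ℏ u n w = 0 := by
  have hPr0 : ∀ k : ℕ,
      (List.ofFn fun i : Fin k => E11 ℏ + algebraMap ℂ (Um2 ℏ) (u - (i : ℕ) * ℏ)).prod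
        = Pr ℏ u 0 k := by
    intro k
    unfold Pr fgen
    congr 1
    apply congrArg List.ofFn
    funext i
    norm_num
  cases n with
  | zero => simp [kirP2]
  | succ m =>
    set T : Um2 ℏ := E21 ℏ - 1 with hT
    set c : ℕ → ℂ := fun k => ℏ⁻¹ ^ k * ((Nat.factorial k : ℂ))⁻¹ with hc
    set g : ℕ → W := fun k =>
      Nat.rec (0:W) (fun j _ => c j • (op (T ^ (j+1) * Pr ℏ u 1 j) • w)) k with hg
    have hg0 : g 0 = 0 := rfl
    have hgs : ∀ j, g (j+1) = c j • (op (T ^ (j+1) * Pr ℏ u 1 j) • w) := fun j => rfl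
    have step : ∀ k, op T • (c k • (op (T ^ k * Pr ℏ u 0 k) • w)) = g (k+1) - g k := by
      intro k
      rw [mop_smul_comm, op_op_smul]
      cases k with
      | zero =>
        rw [hgs, hg0, sub_zero]
        simp [hc, Pr_zero]
      | succ j =>
        have hmul : T ^ (j+1) * Pr ℏ u 0 (j+1) * T
            = T ^ (j+1+1) * Pr ℏ u 1 (j+1) - (((j:ℂ)+1) * ℏ) • (T ^ (j+1) * Pr ℏ u 1 j) := by
          rw [mul_assoc, key, mul_sub, ← hT, ← mul_assoc, ← pow_succ, mul_smul_comm]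
        have hcs : c (j+1) * (((j:ℂ)+1)*ℏ) = c j := by
          simp only [hc]; exact cfac_step ℏ hℏ j
        rw [hmul, op_sub, op_smul, sub_smul, smul_assoc, smul_sub, smul_smul, hcs,
          hgs, hgs]
    calc op T • kirP2 ℏ u (m+1) w
        = ∑ k ∈ Finset.range (m+1), op T • (c k • (op (T ^ k * Pr ℏ u 0 k) • w)) := by
          rw [kirP2, Finset.smul_sum]
          exact Finset.sum_congr rfl fun k _ => by rw [hPr0]
      _ = ∑ k ∈ Finset.range (m+1), (g (k+1) - g k) :=
          Finset.sum_congr rfl fun k _ => step k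
      _ = g (m+1) - g 0 := Finset.sum_range_sub g (m+1)
      _ = 0 := by
          rw [hg0, sub_zero, hgs]
          have h5 : op (T ^ (m+1) * Pr ℏ u 1 m) • w
              = op (Pr ℏ u 1 m) • (op (T ^ (m+1)) • w) := (op_op_smul _ _ _).symm
          rw [h5, hn, smul_zero, smul_zero]
end
end

section
/- Let ℏ ∈ ℂ be nonzero, u ∈ ℂ, and let W be a right U_ℏ(𝔪_2)-module on which E_{21} − 1 acts locally nilpotently. With P(u) : W → W defined by P(u)(w) = ∑_{k ≥ 0} ℏ^{−k}·(1/k!)·w·(E_{21}−1)^k·(E_{11}+u)(E_{11}+u−ℏ)⋯(E_{11}+u−(k−1)ℏ), one has P(u−ℏ)(w·E_{21}) = P(u)(w) for every w ∈ W. -/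
noncomputable section
open MulOpposite

/-- Auxiliary: the product `(E_{11}+u)(E_{11}+u−ℏ)⋯(E_{11}+u−(k−1)ℏ)`. -/
def prodP (ℏ u : ℂ) (k : ℕ) : Um2 ℏ :=
  (List.ofFn fun i : Fin k => E11 ℏ + algebraMap ℂ (Um2 ℏ) (u - (i : ℕ) * ℏ)).prod

lemma kirP2_def (ℏ u : ℂ) {W : Type*} [AddCommGroup W] [Module ℂ W] [Module (Um2 ℏ)ᵐᵒᵖ W]
    (n : ℕ) (w : W) : kirP2 ℏ u n w =
    ∑ k ∈ Finset.range n, (ℏ⁻¹ ^ k * ((Nat.factorial k : ℂ))⁻¹) •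
      (op ((E21 ℏ - 1) ^ k * prodP ℏ u k) • w) := rfl

lemma prodP_zero (ℏ u : ℂ) : prodP ℏ u 0 = 1 := by
  simp [prodP]

lemma prodP_succ_left (ℏ u : ℂ) (k : ℕ) :
    prodP ℏ u (k + 1) = (E11 ℏ + algebraMap ℂ (Um2 ℏ) u) * prodP ℏ (u - ℏ) k := by
  rw [prodP, List.ofFn_succ, List.prod_cons, prodP]
  have h0 : u - (((0 : Fin (k + 1)) : ℕ) : ℂ) * ℏ = u := by norm_num
  have h1 : (fun i : Fin k => E11 ℏ + algebraMap ℂ (Um2 ℏ) (u - ((i.succ : Fin (k + 1)) : ℕ) * ℏ))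
      = fun i : Fin k => E11 ℏ + algebraMap ℂ (Um2 ℏ) (u - ℏ - (i : ℕ) * ℏ) := by
    funext i
    congr 1
    congr 1
    rw [Fin.val_succ]
    push_cast
    ring
  rw [h0, h1]

lemma prodP_succ_right (ℏ u : ℂ) (k : ℕ) :
    prodP ℏ u (k + 1) = prodP ℏ u k * (E11 ℏ + algebraMap ℂ (Um2 ℏ) (u - k * ℏ)) := by
  rw [prodP, List.ofFn_succ', List.concat_eq_append, List.prod_append, List.prod_cons,
    List.prod_nil, mul_one, prodP]
  have h0 : u - (((Fin.last k : Fin (k + 1)) : ℕ) : ℂ) * ℏ = u - k * ℏ := by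
    rw [Fin.val_last]
  have h1 : (fun i : Fin k => E11 ℏ + algebraMap ℂ (Um2 ℏ)
        (u - ((Fin.castSucc i : Fin (k + 1)) : ℕ) * ℏ))
      = fun i : Fin k => E11 ℏ + algebraMap ℂ (Um2 ℏ) (u - (i : ℕ) * ℏ) := by
    funext i
    simp
  rw [h0, h1]

lemma E11_commute_prodP (ℏ u : ℂ) (k : ℕ) : Commute (E11 ℏ) (prodP ℏ u k) := by
  induction k with
  | zero => rw [prodP_zero]; exact Commute.one_right _
  | succ k ih =>
      rw [prodP_succ_right]
      exact ih.mul_right (Commute.add_right (Commute.refl _) (Algebra.commutes _ _).symm)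

lemma prodP_key (ℏ u : ℂ) (k : ℕ) :
    prodP ℏ u (k + 1) = prodP ℏ (u - ℏ) (k + 1) + (((k : ℂ) + 1) * ℏ) • prodP ℏ (u - ℏ) k := by
  rw [prodP_succ_left, prodP_succ_right]
  have hc : (E11 ℏ + algebraMap ℂ (Um2 ℏ) u) * prodP ℏ (u - ℏ) k
      = prodP ℏ (u - ℏ) k * (E11 ℏ + algebraMap ℂ (Um2 ℏ) u) := by
    rw [add_mul, mul_add, (E11_commute_prodP ℏ (u - ℏ) k).eq, Algebra.commutes]
  rw [hc, mul_add, mul_add]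
  have : algebraMap ℂ (Um2 ℏ) u = algebraMap ℂ (Um2 ℏ) (u - ℏ - k * ℏ)
      + algebraMap ℂ (Um2 ℏ) (((k : ℂ) + 1) * ℏ) := by
    rw [← map_add]; congr 1; ring
  rw [this, mul_add]
  have h2 : prodP ℏ (u - ℏ) k * algebraMap ℂ (Um2 ℏ) (((k : ℂ) + 1) * ℏ)
      = (((k : ℂ) + 1) * ℏ) • prodP ℏ (u - ℏ) k := by
    rw [Algebra.smul_def, ← Algebra.commutes]
  rw [h2]; abel

lemma coeff_rec (ℏ : ℂ) (hℏ : ℏ ≠ 0) (K : ℕ) :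
    (ℏ⁻¹ ^ K * ((Nat.factorial K : ℂ))⁻¹)
      = (ℏ⁻¹ ^ (K + 1) * ((Nat.factorial (K + 1) : ℂ))⁻¹) * (((K : ℂ) + 1) * ℏ) := by
  have h1 : (Nat.factorial K : ℂ) ≠ 0 := Nat.cast_ne_zero.2 (Nat.factorial_ne_zero K)
  have h2 : (Nat.factorial (K + 1) : ℂ) ≠ 0 := Nat.cast_ne_zero.2 (Nat.factorial_ne_zero _)
  have h3 : ((K : ℂ) + 1) ≠ 0 := Nat.cast_add_one_ne_zero K
  have h4 : (Nat.factorial (K + 1) : ℂ)⁻¹ = ((K : ℂ) + 1)⁻¹ * (Nat.factorial K : ℂ)⁻¹ := by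
    rw [Nat.factorial_succ]
    push_cast
    rw [mul_inv]
  rw [h4, pow_succ]
  field_simp

lemma op_pow_smul_eq_zero {ℏ : ℂ} {W : Type*} [AddCommGroup W] [Module (Um2 ℏ)ᵐᵒᵖ W]
    (a : Um2 ℏ) (w : W) {n : ℕ} (hn : op (a ^ n) • w = 0) {k : ℕ} (hk : n ≤ k) :
    op (a ^ k) • w = 0 := by
  obtain ⟨d, rfl⟩ := Nat.exists_eq_add_of_le hk
  rw [pow_add, op_mul, mul_smul, hn, smul_zero]

lemma kirP2_stable (ℏ u : ℂ) {W : Type*} [AddCommGroup W] [Module ℂ W]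
    [Module (Um2 ℏ)ᵐᵒᵖ W] {n N : ℕ} (hnN : n ≤ N) (w : W)
    (hn : op ((E21 ℏ - 1) ^ n) • w = 0) :
    kirP2 ℏ u N w = kirP2 ℏ u n w := by
  rw [kirP2_def, kirP2_def]
  refine (Finset.sum_subset (Finset.range_subset_range.2 hnN) ?_).symm
  intro k _ hk
  rw [Finset.mem_range, not_lt] at hk
  have h0 : op ((E21 ℏ - 1) ^ k * prodP ℏ u k) • w = 0 := by
    rw [op_mul, mul_smul, op_pow_smul_eq_zero _ w hn hk, smul_zero]
  rw [h0, smul_zero]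

lemma mulSubOnePow_aux {R : Type*} [Ring R] (a p : R) (j : ℕ) :
    a * ((a - 1) ^ j * p) = (a - 1) ^ (j + 1) * p + (a - 1) ^ j * p := by
  have h1 : (a - 1) ^ (j + 1) * p = (a - 1) * ((a - 1) ^ j * p) := by
    rw [pow_succ', mul_assoc]
  rw [h1, ← add_one_mul, sub_add_cancel]

lemma kirP2_step (ℏ : ℂ) (hℏ : ℏ ≠ 0) (u : ℂ) {W : Type*} [AddCommGroup W] [Module ℂ W]
    [Module (Um2 ℏ)ᵐᵒᵖ W] [IsScalarTower ℂ (Um2 ℏ)ᵐᵒᵖ W] (w : W) (K : ℕ) :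
    kirP2 ℏ (u - ℏ) (K + 1) (op (E21 ℏ) • w)
      = kirP2 ℏ u (K + 1) w
        + (ℏ⁻¹ ^ K * ((Nat.factorial K : ℂ))⁻¹) •
          (op ((E21 ℏ - 1) ^ (K + 1) * prodP ℏ (u - ℏ) K) • w) := by
  induction K with
  | zero =>
      rw [kirP2_def, kirP2_def]
      simp only [zero_add, Finset.sum_range_one, pow_zero, one_mul, Nat.factorial_zero,
        Nat.cast_one, inv_one, one_smul, prodP_zero, mul_one, pow_one]
      rw [op_one, one_smul, one_smul, op_sub, op_one, sub_smul, one_smul]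
      abel
  | succ K ih =>
      have hsum1 : kirP2 ℏ (u - ℏ) (K + 1 + 1) (op (E21 ℏ) • w)
          = kirP2 ℏ (u - ℏ) (K + 1) (op (E21 ℏ) • w)
            + (ℏ⁻¹ ^ (K + 1) * ((Nat.factorial (K + 1) : ℂ))⁻¹) •
              (op ((E21 ℏ - 1) ^ (K + 1) * prodP ℏ (u - ℏ) (K + 1)) • (op (E21 ℏ) • w)) := by
        rw [kirP2_def, Finset.sum_range_succ, ← kirP2_def]
      have hsum2 : kirP2 ℏ u (K + 1 + 1) w
          = kirP2 ℏ u (K + 1) w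
            + (ℏ⁻¹ ^ (K + 1) * ((Nat.factorial (K + 1) : ℂ))⁻¹) •
              (op ((E21 ℏ - 1) ^ (K + 1) * prodP ℏ u (K + 1)) • w) := by
        rw [kirP2_def, Finset.sum_range_succ, ← kirP2_def]
      have e1 : op ((E21 ℏ - 1) ^ (K + 1) * prodP ℏ (u - ℏ) (K + 1)) • (op (E21 ℏ) • w)
          = op (E21 ℏ * ((E21 ℏ - 1) ^ (K + 1) * prodP ℏ (u - ℏ) (K + 1))) • w := by
        have : op (E21 ℏ * ((E21 ℏ - 1) ^ (K + 1) * prodP ℏ (u - ℏ) (K + 1))) • w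
            = op ((E21 ℏ - 1) ^ (K + 1) * prodP ℏ (u - ℏ) (K + 1)) • (op (E21 ℏ) • w) := by
          rw [op_mul, mul_smul]
        rw [this]
      have key : (ℏ⁻¹ ^ K * ((Nat.factorial K : ℂ))⁻¹)
            • ((E21 ℏ - 1) ^ (K + 1) * prodP ℏ (u - ℏ) K)
          + (ℏ⁻¹ ^ (K + 1) * ((Nat.factorial (K + 1) : ℂ))⁻¹)
            • (E21 ℏ * ((E21 ℏ - 1) ^ (K + 1) * prodP ℏ (u - ℏ) (K + 1)))
          = (ℏ⁻¹ ^ (K + 1) * ((Nat.factorial (K + 1) : ℂ))⁻¹)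
              • ((E21 ℏ - 1) ^ (K + 1) * prodP ℏ u (K + 1))
            + (ℏ⁻¹ ^ (K + 1) * ((Nat.factorial (K + 1) : ℂ))⁻¹)
              • ((E21 ℏ - 1) ^ (K + 1 + 1) * prodP ℏ (u - ℏ) (K + 1)) := by
        rw [mulSubOnePow_aux, prodP_key ℏ u K, coeff_rec ℏ hℏ K]
        rw [mul_add ((E21 ℏ - 1) ^ (K + 1)), mul_smul_comm, smul_add, smul_add, smul_smul]
        abel
      have h5 := congrArg (fun x : Um2 ℏ => op x • w) key
      simp only [op_add, op_smul, add_smul, smul_assoc] at h5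
      rw [hsum1, hsum2, ih, e1, add_assoc, h5, ← add_assoc]

theorem statement15 (ℏ : ℂ) (hℏ : ℏ ≠ 0) (u : ℂ)
    (W : Type*) [AddCommGroup W] [Module ℂ W] [Module (Um2 ℏ)ᵐᵒᵖ W]
    [IsScalarTower ℂ (Um2 ℏ)ᵐᵒᵖ W]
    (hW : ∀ w : W, ∃ n : ℕ, op ((E21 ℏ - 1) ^ n) • w = 0)
    (w : W) (m n : ℕ)
    (hm : op ((E21 ℏ - 1) ^ m) • (op (E21 ℏ) • w) = 0)
    (hn : op ((E21 ℏ - 1) ^ n) • w = 0) :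
    kirP2 ℏ (u - ℏ) m (op (E21 ℏ) • w) = kirP2 ℏ u n w := by
  set N := max m n with hN
  have hmN : m ≤ N + 1 := le_trans (le_max_left m n) (Nat.le_succ N)
  have hnN : n ≤ N + 1 := le_trans (le_max_right m n) (Nat.le_succ N)
  have h1 : kirP2 ℏ (u - ℏ) (N + 1) (op (E21 ℏ) • w) = kirP2 ℏ (u - ℏ) m (op (E21 ℏ) • w) :=
    kirP2_stable ℏ (u - ℏ) hmN _ hm
  have h2 : kirP2 ℏ u (N + 1) w = kirP2 ℏ u n w :=
    kirP2_stable ℏ u hnN w hn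
  have h3 := kirP2_step ℏ hℏ u w N
  have h4 : op ((E21 ℏ - 1) ^ (N + 1) * prodP ℏ (u - ℏ) N) • w = 0 := by
    rw [op_mul, mul_smul, op_pow_smul_eq_zero _ w hn hnN, smul_zero]
  rw [h1, h2, h4, smul_zero, add_zero] at h3
  exact h3
end
end
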